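/- arXiv:2602.02135 — 7 statements merged into one kernel-verified Lean document; each statement's English description precedes it below -/
import Mathlib

section
/- Let G = (C ∪ I, E) be a connected split graph where C is a maximal clique. Then G is K_{1,3}-free (claw-free) if and only if either Δ^I_G ≤ 1, or Δ^I_G = 2 and for every pair of vertices u, v ∈ C with d^I_G(v) = 2, we have N^I_G(u) ∩ N^I_G(v) ≠ ∅. -/
def IsDominatingSet {V : Type*} (G : SimpleGraph V) (D : Set V) : Prop :=
  ∀ v ∉ D, ∃ u ∈ D, G.Adj u v

noncomputable def domNum {V : Type*} [Fintype V] (G : SimpleGraph V) : ℕ :=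
  sInf {n | ∃ D : Finset V, IsDominatingSet G ↑D ∧ D.card = n}

def IsIndepSet {V : Type*} (G : SimpleGraph V) (s : Set V) : Prop :=
  s.Pairwise fun a b => ¬ G.Adj a b
def ClawFree {V : Type*} (G : SimpleGraph V) : Prop :=
  ∀ c a b d : V, G.Adj c a → G.Adj c b → G.Adj c d →
    a ≠ b → a ≠ d → b ≠ d → (G.Adj a b ∨ G.Adj a d ∨ G.Adj b d)

/-- Characterization of claw-free connected split graphs (Theorem: Renjith–Sadagopan). -/
theorem stmt_2 {V : Type*} [Fintype V] [DecidableEq V] (G : SimpleGraph V)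
    [DecidableRel G.Adj]
    (C I : Finset V)
    (hpart : ∀ v : V, v ∈ C ∨ v ∈ I) (hdisj : Disjoint C I)
    (hclique : G.IsClique ↑C) (hindep : IsIndepSet G ↑I)
    (hmax : ∀ w ∉ C, ¬ G.IsClique (insert w ↑C))
    (hconn : G.Connected) :
    ClawFree G ↔
      ((C.sup (fun v => (G.neighborFinset v ∩ I).card) ≤ 1) ∨
       (C.sup (fun v => (G.neighborFinset v ∩ I).card) = 2 ∧
        ∀ u ∈ C, ∀ v ∈ C, (G.neighborFinset v ∩ I).card = 2 →
          (G.neighborFinset u ∩ I) ∩ (G.neighborFinset v ∩ I) ≠ ∅)) := by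
  classical
  set f : V → ℕ := fun v => (G.neighborFinset v ∩ I).card with hf
  have hne : ∀ {x u : V}, x ∈ I → u ∈ C → x ≠ u := by
    intro x u hx hu h
    exact Finset.disjoint_left.mp hdisj hu (h ▸ hx)
  have hpair : ∀ {c p q : V}, p ∈ I → q ∈ I → p ≠ q → G.Adj c p → G.Adj c q →
      ({p, q} : Finset V) ⊆ G.neighborFinset c ∩ I := by
    intro c p q hp hq hpq hcp hcq w hw
    simp only [Finset.mem_insert, Finset.mem_singleton] at hw
    rcases hw with rfl | rfl <;> simp [SimpleGraph.mem_neighborFinset, *]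
  constructor
  · intro hcf
    by_cases hle : C.sup f ≤ 1
    · exact Or.inl hle
    · right
      have hsup2 : C.sup f ≤ 2 := by
        apply Finset.sup_le
        intro v hv
        by_contra hgt
        push_neg at hgt
        obtain ⟨s, hs, hcard⟩ := Finset.exists_subset_card_eq (show 3 ≤ (G.neighborFinset v ∩ I).card from hgt)
        obtain ⟨x, y, z, hxy, hxz, hyz, rfl⟩ := Finset.card_eq_three.mp hcard
        have hx : x ∈ G.neighborFinset v ∩ I := hs (by simp)
        have hy : y ∈ G.neighborFinset v ∩ I := hs (by simp)
        have hz : z ∈ G.neighborFinset v ∩ I := hs (by simp)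
        simp only [Finset.mem_inter, SimpleGraph.mem_neighborFinset] at hx hy hz
        rcases hcf v x y z hx.1 hy.1 hz.1 hxy hxz hyz with h | h | h
        · exact hindep (Finset.mem_coe.mpr hx.2) (Finset.mem_coe.mpr hy.2) hxy h
        · exact hindep (Finset.mem_coe.mpr hx.2) (Finset.mem_coe.mpr hz.2) hxz h
        · exact hindep (Finset.mem_coe.mpr hy.2) (Finset.mem_coe.mpr hz.2) hyz h
      refine ⟨le_antisymm hsup2 (by omega), ?_⟩
      intro u hu v hv hv2
      by_cases huv : u = v
      · subst huv
        rw [Finset.inter_self]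
        intro h
        rw [h] at hv2; simp at hv2
      · intro hempty
        obtain ⟨x, y, hxy, hset⟩ := Finset.card_eq_two.mp hv2
        have hx : x ∈ G.neighborFinset v ∩ I := by rw [hset]; simp
        have hy : y ∈ G.neighborFinset v ∩ I := by rw [hset]; simp
        simp only [Finset.mem_inter, SimpleGraph.mem_neighborFinset] at hx hy
        have hux : ¬ G.Adj u x := by
          intro h
          have : x ∈ (G.neighborFinset u ∩ I) ∩ (G.neighborFinset v ∩ I) := by
            simp [SimpleGraph.mem_neighborFinset, h, hx.1, hx.2]
          rw [hempty] at this; simp at this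
        have huy : ¬ G.Adj u y := by
          intro h
          have : y ∈ (G.neighborFinset u ∩ I) ∩ (G.neighborFinset v ∩ I) := by
            simp [SimpleGraph.mem_neighborFinset, h, hy.1, hy.2]
          rw [hempty] at this; simp at this
        have hvu : G.Adj v u := hclique (Finset.mem_coe.mpr hv) (Finset.mem_coe.mpr hu) (Ne.symm huv)
        rcases hcf v u x y hvu hx.1 hy.1 (Ne.symm (hne hx.2 hu)) (Ne.symm (hne hy.2 hu)) hxy with h | h | h
        · exact hux h
        · exact huy h
        · exact hindep (Finset.mem_coe.mpr hx.2) (Finset.mem_coe.mpr hy.2) hxy h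
  · intro h c a b d hca hcb hcd hab had hbd
    rcases hpart c with hcC | hcI
    · -- c in clique
      have hCC : ∀ {p q : V}, p ∈ C → q ∈ C → p ≠ q → G.Adj p q := by
        intro p q hp hq hpq
        exact hclique (Finset.mem_coe.mpr hp) (Finset.mem_coe.mpr hq) hpq
      rcases h with hle | ⟨hsup, hP⟩
      · -- sup ≤ 1 : at most one I-neighbor of c
        have hone : ∀ {p q : V}, p ∈ I → q ∈ I → p ≠ q → G.Adj c p → G.Adj c q → False := by
          intro p q hp hq hpq hcp hcq
          have h2 : 2 ≤ f c := by
            rw [hf]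
            calc 2 = ({p, q} : Finset V).card := (Finset.card_pair hpq).symm
            _ ≤ _ := Finset.card_le_card (hpair hp hq hpq hcp hcq)
          have := Finset.le_sup (f := f) hcC
          omega
        rcases hpart a with ha | ha <;> rcases hpart b with hb | hb <;> rcases hpart d with hd | hd
        · exact Or.inl (hCC ha hb hab)
        · exact Or.inl (hCC ha hb hab)
        · exact Or.inr (Or.inl (hCC ha hd had))
        · exact absurd (hone hb hd hbd hcb hcd) id
        · exact Or.inr (Or.inr (hCC hb hd hbd))
        · exact absurd (hone ha hd had hca hcd) id
        · exact absurd (hone ha hb hab hca hcb) id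
        · exact absurd (hone ha hb hab hca hcb) id
      · -- sup = 2
        have hfc2 : (G.neighborFinset c ∩ I).card ≤ 2 := hsup ▸ Finset.le_sup (f := f) hcC
        have key : ∀ {u p q : V}, u ∈ C → p ∈ I → q ∈ I → p ≠ q →
            G.Adj c p → G.Adj c q → G.Adj u p ∨ G.Adj u q := by
          intro u p q hu hp hq hpq hcp hcq
          have hsub := hpair hp hq hpq hcp hcq
          have h2 : ({p, q} : Finset V).card = 2 := Finset.card_pair hpq
          have heq : G.neighborFinset c ∩ I = {p, q} :=
            (Finset.eq_of_subset_of_card_le hsub (by rw [h2]; exact hfc2)).symm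
          have hcard : (G.neighborFinset c ∩ I).card = 2 := by rw [heq, h2]
          have hnonempty := hP u hu c hcC hcard
          obtain ⟨w, hw⟩ := Finset.nonempty_iff_ne_empty.mpr hnonempty
          rw [Finset.mem_inter, heq] at hw
          have hw1 := hw.1
          simp only [Finset.mem_inter, SimpleGraph.mem_neighborFinset] at hw1
          rcases Finset.mem_insert.mp hw.2 with rfl | hw2
          · exact Or.inl hw1.1
          · rw [Finset.mem_singleton] at hw2
            subst hw2
            exact Or.inr hw1.1
        have hthree : ∀ {p q r : V}, p ∈ I → q ∈ I → r ∈ I → p ≠ q → p ≠ r → q ≠ r →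
            G.Adj c p → G.Adj c q → G.Adj c r → False := by
          intro p q r hp hq hr hpq hpr hqr hcp hcq hcr
          have hsub : ({p, q, r} : Finset V) ⊆ G.neighborFinset c ∩ I := by
            intro w hw
            simp only [Finset.mem_insert, Finset.mem_singleton] at hw
            rcases hw with rfl | rfl | rfl <;> simp [SimpleGraph.mem_neighborFinset, *]
          have h3 : ({p, q, r} : Finset V).card = 3 := by
            rw [Finset.card_insert_of_notMem (by simp [hpq, hpr]),
              Finset.card_pair hqr]
          have := Finset.card_le_card hsub
          rw [h3] at this
          omega
        rcases hpart a with ha | ha <;> rcases hpart b with hb | hb <;> rcases hpart d with hd | hd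
        · exact Or.inl (hCC ha hb hab)
        · exact Or.inl (hCC ha hb hab)
        · exact Or.inr (Or.inl (hCC ha hd had))
        · rcases key ha hb hd hbd hcb hcd with h' | h'
          · exact Or.inl h'
          · exact Or.inr (Or.inl h')
        · exact Or.inr (Or.inr (hCC hb hd hbd))
        · rcases key hb ha hd had hca hcd with h' | h'
          · exact Or.inl h'.symm
          · exact Or.inr (Or.inr h')
        · rcases key hd ha hb hab hca hcb with h' | h'
          · exact Or.inr (Or.inl h'.symm)
          · exact Or.inr (Or.inr h'.symm)
        · exact absurd (hthree ha hb hd hab had hbd hca hcb hcd) id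
    · -- c in independent set: all neighbors in C
      have hC : ∀ {x : V}, G.Adj c x → x ∈ C := by
        intro x hx
        rcases hpart x with h' | h'
        · exact h'
        · exact absurd hx (hindep (Finset.mem_coe.mpr hcI) (Finset.mem_coe.mpr h') hx.ne)
      exact Or.inl (hclique (Finset.mem_coe.mpr (hC hca)) (Finset.mem_coe.mpr (hC hcb)) hab)
end

section
/- Let G = (C ∪ I, E) be a connected claw-free split graph (with C a maximal clique) such that Δ^I_G = 2. Then |I| ≤ 3. -/
/-- A connected claw-free split graph with Δ^I = 2 has |I| ≤ 3. -/
theorem stmt_3 {V : Type*} [Fintype V] [DecidableEq V] (G : SimpleGraph V)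
    [DecidableRel G.Adj]
    (C I : Finset V)
    (hpart : ∀ v : V, v ∈ C ∨ v ∈ I) (hdisj : Disjoint C I)
    (hclique : G.IsClique ↑C) (hindep : IsIndepSet G ↑I)
    (hmax : ∀ w ∉ C, ¬ G.IsClique (insert w ↑C))
    (hconn : G.Connected)
    (hclaw : ClawFree G)
    (hdelta : C.sup (fun v => (G.neighborFinset v ∩ I).card) = 2) :
    I.card ≤ 3 := by
  by_contra hI
  push_neg at hI
  -- basic facts
  have neIC : ∀ u ∈ I, ∀ d ∈ C, u ≠ d := by
    intro u hu d hd h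
    exact (Finset.disjoint_left.mp hdisj hd) (h ▸ hu)
  -- C is nonempty
  have hCne : C.Nonempty := by
    rcases C.eq_empty_or_nonempty with h | h
    · rw [h] at hdelta; simp at hdelta
    · exact h
  -- degree bound
  have hle : ∀ e ∈ C, (G.neighborFinset e ∩ I).card ≤ 2 :=
    fun e he => le_of_le_of_eq (Finset.le_sup (f := fun v => (G.neighborFinset v ∩ I).card) he) hdelta
  -- H1 : no vertex of C has 3 distinct I-neighbors
  have H1 : ∀ e ∈ C, ∀ u v w : V, u ∈ I → v ∈ I → w ∈ I → u ≠ v → u ≠ w → v ≠ w →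
      G.Adj e u → G.Adj e v → G.Adj e w → False := by
    intro e he u v w hu hv hw huv huw hvw au av aw
    have hsub : ({u, v, w} : Finset V) ⊆ G.neighborFinset e ∩ I := by
      intro x hx
      simp only [Finset.mem_insert, Finset.mem_singleton] at hx
      rcases hx with rfl | rfl | rfl <;>
        simp [Finset.mem_inter, SimpleGraph.mem_neighborFinset, au, av, aw, hu, hv, hw]
    have h3 : ({u, v, w} : Finset V).card = 3 := by
      rw [Finset.card_insert_of_notMem (by simp [huv, huw]),
        Finset.card_insert_of_notMem (by simp [hvw]), Finset.card_singleton]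
    have := Finset.card_le_card hsub
    have := hle e he
    omega
  -- H2 : claw condition
  have H2 : ∀ e ∈ C, ∀ u v : V, u ∈ I → v ∈ I → u ≠ v → G.Adj e u → G.Adj e v →
      ∀ d ∈ C, d ≠ e → G.Adj d u ∨ G.Adj d v := by
    intro e he u v hu hv huv aeu aev d hd hde
    have hed : G.Adj e d := hclique (Finset.mem_coe.mpr he) (Finset.mem_coe.mpr hd) (Ne.symm hde)
    rcases hclaw e u v d aeu aev hed huv (neIC u hu d hd) (neIC v hv d hd) with h | h | h
    · exact absurd h (hindep (Finset.mem_coe.mpr hu) (Finset.mem_coe.mpr hv) huv)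
    · exact Or.inl h.symm
    · exact Or.inr h.symm
  -- H3 : maximality: every i ∈ I has a non-neighbor in C
  have H3 : ∀ i ∈ I, ∃ d ∈ C, ¬ G.Adj d i := by
    intro i hi
    by_contra h
    push_neg at h
    have hiC : i ∉ C := fun hc => (neIC i hi i hc) rfl
    exact hmax i hiC (hclique.insert (fun b hb hne => ((h b hb).symm)))
  -- H4 : connectivity: every i ∈ I has a neighbor in C
  have H4 : ∀ i ∈ I, ∃ e ∈ C, G.Adj e i := by
    intro i hi
    obtain ⟨c0, hc0⟩ := hCne
    obtain ⟨p⟩ := hconn.preconnected i c0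
    cases p with
    | nil => exact absurd rfl (neIC i hi i hc0)
    | cons h q =>
      rename_i w
      rcases hpart w with hw | hw
      · exact ⟨w, hw, h.symm⟩
      · exact absurd h (hindep (Finset.mem_coe.mpr hi) (Finset.mem_coe.mpr hw)
          (G.ne_of_adj h))
  -- obtain c with exactly 2 I-neighbors a ≠ b
  obtain ⟨c, hcC, hcsup⟩ := Finset.exists_mem_eq_sup C hCne
    (fun v => (G.neighborFinset v ∩ I).card)
  have hcard : (G.neighborFinset c ∩ I).card = 2 := hcsup ▸ hdelta
  obtain ⟨a, b, hab, hS⟩ := Finset.card_eq_two.mp hcard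
  have haS : a ∈ G.neighborFinset c ∩ I := by rw [hS]; simp
  have hbS : b ∈ G.neighborFinset c ∩ I := by rw [hS]; simp
  have haI : a ∈ I := (Finset.mem_inter.mp haS).2
  have hbI : b ∈ I := (Finset.mem_inter.mp hbS).2
  have hca : G.Adj c a := SimpleGraph.mem_neighborFinset .. |>.mp (Finset.mem_inter.mp haS).1
  have hcb : G.Adj c b := SimpleGraph.mem_neighborFinset .. |>.mp (Finset.mem_inter.mp hbS).1
  -- membership: any I-neighbor of c is a or b
  have hmemS : ∀ x ∈ I, G.Adj c x → x = a ∨ x = b := by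
    intro x hx hadj
    have : x ∈ G.neighborFinset c ∩ I := by
      simp [Finset.mem_inter, SimpleGraph.mem_neighborFinset, hadj, hx]
    rw [hS] at this
    simpa using this
  -- pick i3 ≠ i4 in I \ {a,b}
  have hsd : 1 < (I \ ({a, b} : Finset V)).card := by
    have h1 := Finset.le_card_sdiff ({a, b} : Finset V) I
    have h2 : ({a, b} : Finset V).card ≤ 2 := Finset.card_insert_le a {b}
    omega
  obtain ⟨i3, hi3, i4, hi4, hi34⟩ := Finset.one_lt_card.mp hsd
  rw [Finset.mem_sdiff] at hi3 hi4
  obtain ⟨hi3I, hi3ab⟩ := hi3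
  obtain ⟨hi4I, hi4ab⟩ := hi4
  simp only [Finset.mem_insert, Finset.mem_singleton, not_or] at hi3ab hi4ab
  obtain ⟨hi3a, hi3b⟩ := hi3ab
  obtain ⟨hi4a, hi4b⟩ := hi4ab
  -- neighbors of i3 and i4 in C
  obtain ⟨c3, hc3C, hc3i3⟩ := H4 i3 hi3I
  obtain ⟨c4, hc4C, hc4i4⟩ := H4 i4 hi4I
  have hc3c : c3 ≠ c := by
    rintro rfl
    rcases hmemS i3 hi3I hc3i3 with rfl | rfl
    · exact hi3a rfl
    · exact hi3b rfl
  have hc4c : c4 ≠ c := by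
    rintro rfl
    rcases hmemS i4 hi4I hc4i4 with rfl | rfl
    · exact hi4a rfl
    · exact hi4b rfl
  have clawC : ∀ d ∈ C, d ≠ c → G.Adj d a ∨ G.Adj d b :=
    H2 c hcC a b haI hbI hab hca hcb
  -- main symmetric argument:
  -- u v : the two I-neighbors of c (a,b in some order); e f : c3 c4; j k : i3 i4
  have main : ∀ u v j k e f : V, u ∈ I → v ∈ I → j ∈ I → k ∈ I →
      u ≠ v → j ≠ k → j ≠ u → j ≠ v → k ≠ u → k ≠ v →
      e ∈ C → f ∈ C → G.Adj e j → G.Adj f k → G.Adj c u → G.Adj c v →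
      (∀ d ∈ C, d ≠ c → G.Adj d u ∨ G.Adj d v) →
      G.Adj e u → (G.Adj f u ∨ G.Adj f v) → False := by
    intro u v j k e f huI hvI hjI hkI huv hjk hju hjv hku hkv heC hfC hej hfk
      hcu hcv hclawc heu hf
    have hef : e ≠ f := by
      rintro rfl
      rcases hf with h | h
      · exact H1 e heC j k u hjI hkI huI hjk hju hku hej hfk h
      · exact H1 e heC j k v hjI hkI hvI hjk hjv hkv hej hfk h
    rcases hf with hfu | hfv
    · -- both e,f adjacent to u: use maximality non-neighbor of u
      obtain ⟨d, hdC, hdu⟩ := H3 u huI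
      have hdc : d ≠ c := by rintro rfl; exact hdu hcu
      have hde : d ≠ e := by rintro rfl; exact hdu heu
      have hdf : d ≠ f := by rintro rfl; exact hdu hfu
      have hdv : G.Adj d v := by
        rcases hclawc d hdC hdc with h | h
        · exact absurd h hdu
        · exact h
      have hdj : G.Adj d j := by
        rcases H2 e heC j u hjI huI hju hej heu d hdC hde with h | h
        · exact h
        · exact absurd h hdu
      have hdk : G.Adj d k := by
        rcases H2 f hfC k u hkI huI hku hfk hfu d hdC hdf with h | h
        · exact h
        · exact absurd h hdu
      exact H1 d hdC v j k hvI hjI hkI (Ne.symm hjv) (Ne.symm hkv) hjk hdv hdj hdk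
    · -- mixed: e ~ u, f ~ v : claw at e forces f ~ j or f ~ u, giving f three I-nbrs
      rcases H2 e heC j u hjI huI hju hej heu f hfC (Ne.symm hef) with h | h
      · exact H1 f hfC j k v hjI hkI hvI hjk hjv hkv h hfk hfv
      · exact H1 f hfC u k v huI hkI hvI (Ne.symm hku) huv hkv h hfk hfv
  -- finish: case on which of a,b c3 is adjacent to
  rcases clawC c3 hc3C hc3c with h3 | h3
  · exact main a b i3 i4 c3 c4 haI hbI hi3I hi4I hab hi34 hi3a hi3b hi4a hi4b
      hc3C hc4C hc3i3 hc4i4 hca hcb clawC h3 (clawC c4 hc4C hc4c)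
  · exact main b a i3 i4 c3 c4 hbI haI hi3I hi4I (Ne.symm hab) hi34 hi3b hi3a hi4b hi4a
      hc3C hc4C hc3i3 hc4i4 hcb hca
      (fun d hd hdc => (clawC d hd hdc).symm) h3 ((clawC c4 hc4C hc4c).symm)
end

section
/- Let G = (C ∪ I, E) be a K_{1,3}-free split graph with C a maximal clique. If y_i, y_j ∈ I are distinct vertices with N(y_i) ∩ N(y_j) ≠ ∅, then N(y_i) ∪ N(y_j) = C. -/
/-- In a claw-free split graph with maximal clique C, independent vertices with
intersecting neighborhoods have neighborhoods covering C. -/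
theorem stmt_4 {V : Type*} [Fintype V] [DecidableEq V] (G : SimpleGraph V)
    (C I : Finset V)
    (hpart : ∀ v : V, v ∈ C ∨ v ∈ I) (hdisj : Disjoint C I)
    (hclique : G.IsClique ↑C) (hindep : IsIndepSet G ↑I)
    (hmax : ∀ w ∉ C, ¬ G.IsClique (insert w ↑C))
    (hclaw : ClawFree G)
    (yi yj : V) (hyi : yi ∈ I) (hyj : yj ∈ I) (hne : yi ≠ yj)
    (hmeet : G.neighborSet yi ∩ G.neighborSet yj ≠ ∅) :
    G.neighborSet yi ∪ G.neighborSet yj = ↑C := by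
  have hnbC : ∀ y, y ∈ (I : Set V) → G.neighborSet y ⊆ ↑C := by
    intro y hy v hv
    rcases hpart v with h | h
    · exact h
    · exact absurd hv.symm (hindep h hy (fun e => G.ne_of_adj hv e.symm))
  obtain ⟨x, hxi, hxj⟩ := Set.nonempty_iff_ne_empty.mpr hmeet
  have hxC : x ∈ C := hnbC yi hyi hxi
  ext c
  constructor
  · rintro (h | h)
    · exact hnbC yi hyi h
    · exact hnbC yj hyj h
  · intro hcC
    by_contra hc
    simp only [Set.mem_union] at hc
    push_neg at hc
    obtain ⟨hci, hcj⟩ := hc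
    simp only [SimpleGraph.mem_neighborSet] at hxi hxj hci hcj
    have hxc : x ≠ c := by rintro rfl; exact hci hxi
    have haxc : G.Adj x c := hclique hxC hcC hxc
    have hcC' : c ∈ C := by exact_mod_cast hcC
    have h1 : c ≠ yi := fun e => Finset.disjoint_left.mp hdisj hcC' (e ▸ hyi)
    have h2 : c ≠ yj := fun e => Finset.disjoint_left.mp hdisj hcC' (e ▸ hyj)
    rcases hclaw x c yi yj haxc hxi.symm hxj.symm h1 h2 hne with h | h | h
    · exact hci h.symm
    · exact hcj h.symm
    · exact hindep hyi hyj hne h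
end

section
/- Let G = (V, E) be a graph of order n and let G_P be the GP_5-graph of G, obtained by attaching to each vertex v_i of G a path on five new vertices v_i^0 v_i^1 v_i^2 v_i^3 v_i^4 via the edge v_i v_i^2. Then for any integer k ≤ n, G has a dominating set of cardinality at most k if and only if G_P has a dominating set of cardinality at most k + 2n. -/
def GP5 {V : Type*} (G : SimpleGraph V) : SimpleGraph (V ⊕ V × Fin 5) :=
  SimpleGraph.fromRel (fun a b =>
    (∃ u v : V, a = Sum.inl u ∧ b = Sum.inl v ∧ G.Adj u v) ∨
    (∃ v : V, ∃ i : Fin 4, a = Sum.inr (v, i.castSucc) ∧ b = Sum.inr (v, i.succ)) ∨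
    (∃ v : V, a = Sum.inl v ∧ b = Sum.inr (v, 2)))

/-!
A dominating set `D` of `G` extends to `D ∪ {v¹, v³ | v ∈ V}` in `G_P`. Conversely, let `D'`
dominate `G_P`. Dominating the leaf `v⁰` forces a vertex of `D'` in `{v⁰, v¹}`, and dominating
`v⁴` one in `{v³, v⁴}`; so collapsing every pendant path onto the three zones `{v⁰, v¹}`,
`{v, v²}`, `{v³, v⁴}` maps `D'` onto a set containing `V × {0, 2}`. Since `v` can only be
dominated from `G` or from `v²`, the vertices `v` with `v ∈ D'` or `v² ∈ D'` dominate `G`,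
and they account for the remaining zone, giving `|D| + 2n ≤ |D'|`.
-/

namespace GP5

variable {V : Type*} {G : SimpleGraph V}

@[simp]
theorem adj_inl_inl {u v : V} : (GP5 G).Adj (.inl u) (.inl v) ↔ G.Adj u v := by
  simp [GP5, G.adj_comm v u, and_iff_right_of_imp SimpleGraph.Adj.ne]

@[simp]
theorem adj_inl_inr {u v : V} {i : Fin 5} :
    (GP5 G).Adj (.inl u) (.inr (v, i)) ↔ u = v ∧ i = 2 := by
  simp [GP5, eq_comm]

@[simp]
theorem adj_inr_inl {u v : V} {i : Fin 5} :
    (GP5 G).Adj (.inr (v, i)) (.inl u) ↔ u = v ∧ i = 2 := by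
  rw [SimpleGraph.adj_comm, adj_inl_inr]

@[simp]
theorem adj_inr_inr {u v : V} {i j : Fin 5} :
    (GP5 G).Adj (.inr (u, i)) (.inr (v, j)) ↔
      u = v ∧ (i.val + 1 = j.val ∨ j.val + 1 = i.val) := by
  rcases eq_or_ne u v with rfl | huv
  · simp only [GP5, SimpleGraph.fromRel_adj, ne_eq, Sum.inr.injEq, Prod.mk.injEq, true_and,
      exists_and_left, ↓existsAndEq, reduceCtorEq, false_and, exists_false, or_false, false_or]
    revert i j
    decide
  · simp [GP5, huv, huv.symm]

open Finset

def zone : Fin 5 → Fin 3 := ![0, 0, 1, 2, 2]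

def proj : V ⊕ V × Fin 5 → V × Fin 3 := Sum.elim (fun v => (v, 1)) (fun p => (p.1, zone p.2))

theorem isDominatingSet_disjSum [Fintype V] {D : Finset V} (hD : IsDominatingSet G D) :
    IsDominatingSet (GP5 G) ↑(D.disjSum ((univ : Finset V) ×ˢ ({1, 3} : Finset (Fin 5)))) := by
  rintro (v | ⟨v, i⟩) hv
  · obtain ⟨u, hu, huv⟩ := hD v (by simpa using hv)
    exact ⟨.inl u, by simpa using hu, by simpa using huv⟩
  · have hi : i = 0 ∨ i = 2 ∨ i = 4 := by simp at hv; omega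
    obtain ⟨j, hj, hij⟩ : ∃ j : Fin 5, (j = 1 ∨ j = 3) ∧
        (j.val + 1 = i.val ∨ i.val + 1 = j.val) := by
      rcases hi with rfl | rfl | rfl
      · exact ⟨1, by decide⟩
      · exact ⟨1, by decide⟩
      · exact ⟨3, by decide⟩
    exact ⟨.inr (v, j), by simpa using hj, by simpa using hij⟩

variable [DecidableEq V] {D' : Finset (V ⊕ V × Fin 5)}

theorem mem_image_proj_of_isDominatingSet (hD' : IsDominatingSet (GP5 G) D') (v : V)
    {i : Fin 3} (hi : i ≠ 1) : (v, i) ∈ D'.image proj := by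
  obtain ⟨x, hx⟩ : ∃ x : Fin 5, zone x = i ∧ (x = 0 ∨ x = 4) := by
    revert i; decide
  have zone_adj : ∀ j : Fin 5, (j.val + 1 = x.val ∨ x.val + 1 = j.val) → zone j = zone x := by
    rcases hx.2 with rfl | rfl <;> decide
  by_cases hxD : .inr (v, x) ∈ D'
  · exact mem_image.2 ⟨_, hxD, by simp [proj, hx.1]⟩
  obtain ⟨u, hu, hadj⟩ := hD' _ hxD
  refine mem_image.2 ⟨u, hu, ?_⟩
  rcases u with w | ⟨w, j⟩
  · simp only [adj_inl_inr] at hadj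
    rcases hx.2 with rfl | rfl <;> simp at hadj
  · obtain ⟨rfl, hj⟩ := adj_inr_inr.1 hadj
    simp [proj, zone_adj j hj, hx.1]

variable [Fintype V]

def baseOf (D' : Finset (V ⊕ V × Fin 5)) : Finset V :=
  {v | .inl v ∈ D' ∨ .inr (v, 2) ∈ D'}

theorem isDominatingSet_baseOf (hD' : IsDominatingSet (GP5 G) D') :
    IsDominatingSet G (baseOf D') := by
  intro v hv
  simp only [baseOf, coe_filter, mem_univ, true_and, Set.mem_ofPred_eq, not_or] at hv
  obtain ⟨u, hu, hadj⟩ := hD' _ hv.1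
  rcases u with w | ⟨w, j⟩
  · exact ⟨w, by simp [baseOf, mem_coe.1 hu], adj_inl_inl.1 hadj⟩
  · obtain ⟨rfl, rfl⟩ := adj_inr_inl.1 hadj
    exact absurd hu hv.2

theorem card_baseOf_add_le (hD' : IsDominatingSet (GP5 G) D') :
    #(baseOf D') + 2 * Fintype.card V ≤ #D' := by
  have hsub : univ ×ˢ {0, 2} ∪ baseOf D' ×ˢ {1} ⊆ D'.image proj := by
    rintro ⟨v, i⟩ h
    simp only [mem_union, mem_product, mem_univ, true_and, mem_insert, mem_singleton] at h
    rcases h with h | ⟨hv, rfl⟩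
    · exact mem_image_proj_of_isDominatingSet hD' v (by rcases h with rfl | rfl <;> decide)
    · simp only [baseOf, mem_filter, mem_univ, true_and] at hv
      rcases hv with hv | hv
      · exact mem_image.2 ⟨_, hv, rfl⟩
      · exact mem_image.2 ⟨_, hv, rfl⟩
  have hdisj : Disjoint (univ ×ˢ ({0, 2} : Finset (Fin 3))) (baseOf D' ×ˢ {1}) :=
    disjoint_product.2 (.inr (by decide))
  calc #(baseOf D') + 2 * Fintype.card V
      = #(univ ×ˢ ({0, 2} : Finset (Fin 3)) ∪ baseOf D' ×ˢ {1}) := by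
        rw [card_union_of_disjoint hdisj, card_product, card_product, card_univ,
          card_pair (by decide), card_singleton]
        ring
    _ ≤ #(D'.image proj) := card_le_card hsub
    _ ≤ #D' := card_image_le

end GP5

theorem stmt_8_general {V : Type*} [Fintype V] [DecidableEq V] (G : SimpleGraph V)
    (k : ℕ) :
    (∃ D : Finset V, IsDominatingSet G ↑D ∧ D.card ≤ k) ↔
      (∃ D' : Finset (V ⊕ V × Fin 5), IsDominatingSet (GP5 G) ↑D' ∧
        D'.card ≤ k + 2 * Fintype.card V) := by
  constructor
  · rintro ⟨D, hD, hcard⟩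
    refine ⟨_, GP5.isDominatingSet_disjSum hD, ?_⟩
    rw [Finset.card_disjSum, Finset.card_product, Finset.card_univ,
      Finset.card_pair (by decide)]
    omega
  · rintro ⟨D', hD', hcard⟩
    have := GP5.card_baseOf_add_le hD'
    exact ⟨_, GP5.isDominatingSet_baseOf hD', by omega⟩

/-- G has a dominating set of size ≤ k iff its GP_5-graph has one of size ≤ k + 2n. -/
theorem stmt_8 {V : Type*} [Fintype V] [DecidableEq V] (G : SimpleGraph V)
    (k : ℕ) (hk : k ≤ Fintype.card V) :
    (∃ D : Finset V, IsDominatingSet G ↑D ∧ D.card ≤ k) ↔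
      (∃ D' : Finset (V ⊕ V × Fin 5), IsDominatingSet (GP5 G) ↑D' ∧
        D'.card ≤ k + 2 * Fintype.card V) :=
  stmt_8_general G k
end

section
/- Let G = (V, E) be a graph on n vertices and let G_P be its GP_5-graph. Any dominating set D of G_P satisfies, for each i ∈ [n], |D ∩ {v_i^0, v_i^1}| ≥ 1 and |D ∩ {v_i^3, v_i^4}| ≥ 1; consequently γ(G_P) ≥ 2n. -/
lemma gp5_end0 {V : Type*} (G : SimpleGraph V) (u : V ⊕ V × Fin 5) (v : V)
    (h : (GP5 G).Adj u (Sum.inr (v, 0))) : u = Sum.inr (v, 1) := by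
  rw [GP5, SimpleGraph.fromRel_adj] at h
  obtain ⟨hne, h | h⟩ := h
  · rcases h with ⟨a,b,ha,hb,_⟩|⟨w,i,ha,hb⟩|⟨w,ha,hb⟩
    · exact absurd hb (by simp)
    · exfalso; fin_cases i <;> simp_all (config := {decide := true}) [Fin.ext_iff]
    · exfalso; rw [Sum.inr.injEq, Prod.mk.injEq] at hb; exact absurd hb.2 (by decide)
  · rcases h with ⟨a,b,ha,hb,_⟩|⟨w,i,ha,hb⟩|⟨w,ha,hb⟩
    · exact absurd ha (by simp)
    · fin_cases i <;> simp_all (config := {decide := true}) [Fin.ext_iff]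
    · exact absurd ha (by simp)

lemma gp5_end4 {V : Type*} (G : SimpleGraph V) (u : V ⊕ V × Fin 5) (v : V)
    (h : (GP5 G).Adj u (Sum.inr (v, 4))) : u = Sum.inr (v, 3) := by
  rw [GP5, SimpleGraph.fromRel_adj] at h
  obtain ⟨hne, h | h⟩ := h
  · rcases h with ⟨a,b,ha,hb,_⟩|⟨w,i,ha,hb⟩|⟨w,ha,hb⟩
    · exact absurd hb (by simp)
    · fin_cases i <;> simp_all (config := {decide := true}) [Fin.ext_iff]
    · exfalso; rw [Sum.inr.injEq, Prod.mk.injEq] at hb; exact absurd hb.2 (by decide)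
  · rcases h with ⟨a,b,ha,hb,_⟩|⟨w,i,ha,hb⟩|⟨w,ha,hb⟩
    · exact absurd ha (by simp)
    · exfalso; fin_cases i <;> simp_all (config := {decide := true}) [Fin.ext_iff]
    · exact absurd ha (by simp)

/-- Every dominating set of the GP_5-graph hits {v⁰,v¹} and {v³,v⁴} for each v;
hence γ(G_P) ≥ 2n. -/
theorem stmt_9 {V : Type*} [Fintype V] [DecidableEq V] (G : SimpleGraph V) :
    (∀ D : Finset (V ⊕ V × Fin 5), IsDominatingSet (GP5 G) ↑D →
      ∀ v : V, (Sum.inr (v, 0) ∈ D ∨ Sum.inr (v, 1) ∈ D) ∧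
        (Sum.inr (v, 3) ∈ D ∨ Sum.inr (v, 4) ∈ D)) ∧
    2 * Fintype.card V ≤ domNum (GP5 G) := by
  classical
  have key : ∀ D : Finset (V ⊕ V × Fin 5), IsDominatingSet (GP5 G) ↑D →
      ∀ v : V, (Sum.inr (v, 0) ∈ D ∨ Sum.inr (v, 1) ∈ D) ∧
        (Sum.inr (v, 3) ∈ D ∨ Sum.inr (v, 4) ∈ D) := by
    intro D hD v
    constructor
    · by_cases h0 : Sum.inr (v, (0 : Fin 5)) ∈ D
      · exact Or.inl h0
      · obtain ⟨u, hu, hadj⟩ := hD _ (by simpa using h0)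
        exact Or.inr (gp5_end0 G u v hadj ▸ hu)
    · by_cases h4 : Sum.inr (v, (4 : Fin 5)) ∈ D
      · exact Or.inr h4
      · obtain ⟨u, hu, hadj⟩ := hD _ (by simpa using h4)
        exact Or.inl (gp5_end4 G u v hadj ▸ hu)
  refine ⟨key, ?_⟩
  apply le_csInf
  · exact ⟨Finset.univ.card, Finset.univ, fun v hv => absurd (Finset.mem_coe.mpr (Finset.mem_univ v)) hv, rfl⟩
  rintro n ⟨D, hD, rfl⟩
  set g : V × Fin 2 → V ⊕ V × Fin 5 := fun p =>
    if p.2 = 0 then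
      (if Sum.inr (p.1, (0 : Fin 5)) ∈ D then Sum.inr (p.1, (0 : Fin 5)) else Sum.inr (p.1, (1 : Fin 5)))
    else
      (if Sum.inr (p.1, (3 : Fin 5)) ∈ D then Sum.inr (p.1, (3 : Fin 5)) else Sum.inr (p.1, (4 : Fin 5)))
    with hg
  have hmem : ∀ p : V × Fin 2, g p ∈ D := by
    rintro ⟨v, j⟩
    obtain ⟨h01, h34⟩ := key D hD v
    by_cases hj : j = 0 <;> simp only [hg, hj, if_true, if_false] <;> split_ifs with h <;> simp_all
  have hinj : Set.InjOn g ↑(Finset.univ : Finset (V × Fin 2)) := by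
    rintro ⟨v, j⟩ - ⟨w, k⟩ - h
    simp only [hg] at h
    split_ifs at h <;> simp_all [Prod.ext_iff] <;> omega
  have := Finset.card_le_card_of_injOn g (fun p _ => hmem p) hinj
  simp only [Finset.card_univ, Fintype.card_prod, Fintype.card_fin] at this
  omega
end

section
/- Let G = (C ∪ I, E) be a connected split graph (C a maximal clique) with Δ^I_G ≤ 1 and ⋃_{v ∈ I} N(v) = C. Then γ(G) = |I|, and moreover a minimum dominating set can be chosen consisting of one clique neighbor of each vertex of I. -/
/-- In a connected split graph with Δ^I ≤ 1 whose I-neighborhoods cover C,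
γ(G) = |I| and a minimum dominating set consists of one clique neighbor of each
vertex of I. -/
theorem stmt_11 {V : Type*} [Fintype V] [DecidableEq V] (G : SimpleGraph V)
    [DecidableRel G.Adj]
    (C I : Finset V)
    (hpart : ∀ v : V, v ∈ C ∨ v ∈ I) (hdisj : Disjoint C I)
    (hclique : G.IsClique ↑C) (hindep : IsIndepSet G ↑I)
    (hmax : ∀ w ∉ C, ¬ G.IsClique (insert w ↑C))
    (hconn : G.Connected)
    (hdelta : ∀ v ∈ C, (G.neighborFinset v ∩ I).card ≤ 1)
    (hcov : (⋃ v ∈ (↑I : Set V), G.neighborSet v) = ↑C) :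
    domNum G = I.card ∧
      ∃ f : V → V, (∀ y ∈ I, f y ∈ C ∧ G.Adj (f y) y) ∧
        IsDominatingSet G ↑(I.image f) ∧ (I.image f).card = domNum G := by
  classical
  -- uniqueness of I-neighbor of a clique vertex
  have huniq : ∀ c ∈ C, ∀ y1 ∈ I, ∀ y2 ∈ I, G.Adj c y1 → G.Adj c y2 → y1 = y2 := by
    intro c hc y1 hy1 y2 hy2 h1 h2
    have hcard := hdelta c hc
    have m1 : y1 ∈ G.neighborFinset c ∩ I := by
      simp [Finset.mem_inter, SimpleGraph.mem_neighborFinset, h1, hy1]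
    have m2 : y2 ∈ G.neighborFinset c ∩ I := by
      simp [Finset.mem_inter, SimpleGraph.mem_neighborFinset, h2, hy2]
    exact Finset.card_le_one.mp hcard _ m1 _ m2
  -- every vertex of I has a neighbor in C
  have hInbr : ∀ y ∈ I, ∃ c ∈ C, G.Adj c y := by
    intro y hy
    obtain ⟨c, hc⟩ : C.Nonempty := by
      rw [Finset.nonempty_iff_ne_empty]
      intro h
      have hyC : y ∉ C := by simp [h]
      apply hmax y hyC
      simp [h, SimpleGraph.isClique_iff, Set.Pairwise]
    have hyc : y ≠ c := by
      intro h
      exact Finset.disjoint_left.mp hdisj hc (h ▸ hy)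
    obtain ⟨w⟩ := hconn.preconnected y c
    cases w with
    | nil => exact absurd rfl hyc
    | @cons _ u _ hadj p =>
      rcases hpart u with hu | hu
      · exact ⟨u, hu, hadj.symm⟩
      · exact absurd hadj (hindep (by exact_mod_cast hy) (by exact_mod_cast hu) hadj.ne)
  -- the function f
  set f : V → V := fun y => if h : ∃ c ∈ C, G.Adj c y then h.choose else y with hf
  have hfspec : ∀ y ∈ I, f y ∈ C ∧ G.Adj (f y) y := by
    intro y hy
    have h : ∃ c ∈ C, G.Adj c y := hInbr y hy
    simp only [hf, dif_pos h]
    exact ⟨h.choose_spec.1, h.choose_spec.2⟩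
  have hfinj : Set.InjOn f ↑I := by
    intro y1 hy1 y2 hy2 heq
    have h1 := hfspec y1 hy1
    have h2 := hfspec y2 hy2
    exact huniq (f y1) h1.1 y1 hy1 y2 hy2 h1.2 (heq ▸ h2.2)
  -- D0 dominating
  have hdom : IsDominatingSet G ↑(I.image f) := by
    intro v hv
    rcases hpart v with hvC | hvI
    · have hvC' : v ∈ (↑C : Set V) := hvC
      rw [← hcov] at hvC'
      simp only [Set.mem_iUnion, SimpleGraph.mem_neighborSet] at hvC'
      obtain ⟨y, hy, hadj⟩ := hvC'
      have hyI : y ∈ I := hy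
      have hspec := hfspec y hyI
      have hne : f y ≠ v := fun h =>
        hv (by rw [← h]; exact_mod_cast Finset.mem_image_of_mem f hyI)
      refine ⟨f y, by exact_mod_cast Finset.mem_image_of_mem f hyI, ?_⟩
      exact hclique hspec.1 hvC hne
    · exact ⟨f v, by exact_mod_cast Finset.mem_image_of_mem f hvI, (hfspec v hvI).2⟩
  have hcard0 : (I.image f).card = I.card := Finset.card_image_of_injOn hfinj
  -- lower bound
  have hlb : ∀ D : Finset V, IsDominatingSet G ↑D → I.card ≤ D.card := by
    intro D hD
    have hpick : ∀ y ∈ I, ∃ d ∈ D, d = y ∨ G.Adj d y := by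
      intro y _
      by_cases hyD : y ∈ D
      · exact ⟨y, hyD, Or.inl rfl⟩
      · obtain ⟨u, hu, hadj⟩ := hD y (by exact_mod_cast hyD)
        exact ⟨u, by exact_mod_cast hu, Or.inr hadj⟩
    set p : V → V := fun y => if h : ∃ d ∈ D, d = y ∨ G.Adj d y then h.choose else y with hp
    have hpspec : ∀ y ∈ I, p y ∈ D ∧ (p y = y ∨ G.Adj (p y) y) := by
      intro y hy
      have h := hpick y hy
      simp only [hp, dif_pos h]
      exact ⟨h.choose_spec.1, h.choose_spec.2⟩
    apply Finset.card_le_card_of_injOn p (fun y hy => (hpspec y hy).1)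
    intro y1 hy1 y2 hy2 heq
    have h1 := hpspec y1 hy1
    have h2 := hpspec y2 hy2
    rcases h1.2 with e1 | a1 <;> rcases h2.2 with e2 | a2
    · rw [← e1, ← e2, heq]
    · exfalso
      have ha : G.Adj y1 y2 := by rw [← heq, e1] at a2; exact a2
      exact hindep (by exact_mod_cast hy1) (by exact_mod_cast hy2) ha.ne ha
    · exfalso
      have ha : G.Adj y2 y1 := by rw [heq, e2] at a1; exact a1
      exact hindep (by exact_mod_cast hy2) (by exact_mod_cast hy1) ha.ne ha
    · rw [heq] at a1
      rcases hpart (p y2) with hc | hi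
      · exact huniq (p y2) hc y1 hy1 y2 hy2 a1 a2
      · exact absurd a1 (hindep (by exact_mod_cast hi) (by exact_mod_cast hy1) a1.ne)
  -- conclude
  have hmem : I.card ∈ {n | ∃ D : Finset V, IsDominatingSet G ↑D ∧ D.card = n} :=
    ⟨I.image f, hdom, hcard0⟩
  have h1 : domNum G ≤ I.card := Nat.sInf_le hmem
  have h2 : I.card ≤ domNum G := by
    apply le_csInf ⟨_, hmem⟩
    rintro n ⟨D, hD, rfl⟩
    exact hlb D hD
  have heq : domNum G = I.card := le_antisymm h1 h2
  exact ⟨heq, f, hfspec, hdom, by rw [hcard0, heq]⟩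
end

section
/- Let G = (C ∪ I, E) be a connected claw-free split graph (C maximal) with Δ^I_G = 2 and |I| = 2. Then C contains a universal vertex of G. -/
/-- A connected claw-free split graph with Δ^I = 2 and |I| = 2 has a universal
vertex in C. -/
theorem stmt_16 {V : Type*} [Fintype V] [DecidableEq V] (G : SimpleGraph V)
    [DecidableRel G.Adj]
    (C I : Finset V)
    (hpart : ∀ v : V, v ∈ C ∨ v ∈ I) (hdisj : Disjoint C I)
    (hclique : G.IsClique ↑C) (hindep : IsIndepSet G ↑I)
    (hmax : ∀ w ∉ C, ¬ G.IsClique (insert w ↑C))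
    (hconn : G.Connected)
    (hclaw : ClawFree G)
    (hdelta : C.sup (fun v => (G.neighborFinset v ∩ I).card) = 2)
    (hI : I.card = 2) :
    ∃ c ∈ C, ∀ w : V, w ≠ c → G.Adj c w := by
  have hCne : C.Nonempty := by
    rcases Finset.eq_empty_or_nonempty C with h | h
    · simp [h] at hdelta
    · exact h
  obtain ⟨c, hc, hceq⟩ := Finset.exists_mem_eq_sup C hCne
    (fun v => (G.neighborFinset v ∩ I).card)
  have hcard : (G.neighborFinset c ∩ I).card = 2 := by omega
  have heq : G.neighborFinset c ∩ I = I :=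
    Finset.eq_of_subset_of_card_le Finset.inter_subset_right (by omega)
  refine ⟨c, hc, fun w hw => ?_⟩
  rcases hpart w with hwC | hwI
  · exact hclique (Finset.mem_coe.mpr hc) (Finset.mem_coe.mpr hwC) (Ne.symm hw)
  · have : w ∈ G.neighborFinset c ∩ I := by rw [heq]; exact hwI
    simpa using (Finset.mem_inter.mp this).1
end
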